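/- arXiv:1207.5536 — 3 statements merged into one kernel-verified Lean document; each statement's English description precedes it below -/
import Mathlib

section
/- Let (Ω, P) be a probability space and K ≥ 2 an integer number of arms, indexed by i ∈ {1,…,K}. For each arm i let n_i be a positive integer and let the samples X_{i,1},…,X_{i,n_i} (over all arms i and all indices) be jointly independent random variables with values in [0,1], where each sample of arm i has expectation μ_i. Let arm * be the unique arm maximizing μ_i, write Δ_i = μ_* − μ_i, and let X̄_i = (1/n_i)·Σ_k X_{i,k} denote the sample mean of arm i. Then for any choice of δ_i with 0 < δ_i < Δ_i for each i ≠ *, P( ∃ i ≠ * such that X̄_i ≥ X̄_* ) ≤ Σ_{i ≠ *} [ exp(−2δ_i² n_i) + exp(−2(Δ_i−δ_i)² n_*) ]. -/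
/-!
If some suboptimal arm `i` has sample mean at least that of the optimal arm, then either the
mean of arm `i` overshoots `μ i + δ i` or the mean of the optimal arm undershoots it; since
`μ i + δ i = μ star - (μ star - μ i - δ i)`, both are Hoeffding deviations, of size `δ i` and
`μ star - μ i - δ i`. Hoeffding's lemma makes each centred `[0, 1]`-valued sample
sub-Gaussian with variance proxy `1 / 4`, and a union bound over the arms concludes.
-/

open MeasureTheory ProbabilityTheory Real

section Hoeffding

variable {Ω ι : Type*} [MeasurableSpace Ω] {P : Measure Ω} [IsProbabilityMeasure P]

lemma hasSubgaussianMGF_sub_of_mem_unitInterval {Y : Ω → ℝ} (hY : Measurable Y)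
    (h01 : ∀ ω, Y ω ∈ Set.Icc (0 : ℝ) 1) {m : ℝ} (hm : ∫ ω, Y ω ∂P = m) :
    HasSubgaussianMGF (fun ω ↦ Y ω - m) (1 / 4) P := by
  have h := hasSubgaussianMGF_of_mem_Icc hY.aemeasurable (ae_of_all P h01)
  rw [hm] at h
  convert h using 1
  rw [sub_zero, nnnorm_one]
  norm_num

variable [Fintype ι] [Nonempty ι]

lemma measure_card_mul_le_sum_le {Z : ι → Ω → ℝ} (hind : iIndepFun Z P)
    (hZ : ∀ k, HasSubgaussianMGF (Z k) (1 / 4) P) {δ : ℝ} (hδ : 0 ≤ δ) :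
    P {ω | Fintype.card ι * δ ≤ ∑ k, Z k ω}
      ≤ ENNReal.ofReal (exp (-2 * δ ^ 2 * Fintype.card ι)) := by
  have hcard : (0 : ℝ) < Fintype.card ι := by exact_mod_cast Fintype.card_pos
  have h := HasSubgaussianMGF.measure_sum_ge_le_of_iIndepFun hind (s := Finset.univ)
    (fun k _ ↦ hZ k) (mul_nonneg hcard.le hδ)
  rw [← ofReal_measureReal]
  refine ENNReal.ofReal_le_ofReal (h.trans_eq (congrArg exp ?_))
  simp only [Finset.sum_const, Finset.card_univ, nsmul_eq_mul]
  push_cast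
  field_simp
  ring

lemma measure_add_le_mean_le {Y : ι → Ω → ℝ} (hind : iIndepFun Y P)
    (hY : ∀ k, Measurable (Y k)) (h01 : ∀ k ω, Y k ω ∈ Set.Icc (0 : ℝ) 1) {m : ℝ}
    (hm : ∀ k, ∫ ω, Y k ω ∂P = m) {δ : ℝ} (hδ : 0 ≤ δ) :
    P {ω | m + δ ≤ (1 / Fintype.card ι : ℝ) * ∑ k, Y k ω}
      ≤ ENNReal.ofReal (exp (-2 * δ ^ 2 * Fintype.card ι)) := by
  have hcard : (0 : ℝ) < Fintype.card ι := by exact_mod_cast Fintype.card_pos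
  have hindZ : iIndepFun (fun k ω ↦ Y k ω - m) P :=
    hind.comp (fun _ x ↦ x - m) (fun _ ↦ measurable_id.sub_const m)
  convert measure_card_mul_le_sum_le hindZ
    (fun k ↦ hasSubgaussianMGF_sub_of_mem_unitInterval (hY k) (h01 k) (hm k)) hδ using 3
  ext ω
  simp only [Finset.sum_sub_distrib, Finset.sum_const, Finset.card_univ, nsmul_eq_mul]
  rw [one_div, ← div_eq_inv_mul, le_div_iff₀ hcard]
  constructor <;> intro h <;> linarith

lemma measure_mean_le_sub_le {Y : ι → Ω → ℝ} (hind : iIndepFun Y P)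
    (hY : ∀ k, Measurable (Y k)) (h01 : ∀ k ω, Y k ω ∈ Set.Icc (0 : ℝ) 1) {m : ℝ}
    (hm : ∀ k, ∫ ω, Y k ω ∂P = m) {δ : ℝ} (hδ : 0 ≤ δ) :
    P {ω | (1 / Fintype.card ι : ℝ) * ∑ k, Y k ω ≤ m - δ}
      ≤ ENNReal.ofReal (exp (-2 * δ ^ 2 * Fintype.card ι)) := by
  have hcard : (0 : ℝ) < Fintype.card ι := by exact_mod_cast Fintype.card_pos
  have hindZ : iIndepFun (fun k ω ↦ m - Y k ω) P :=
    hind.comp (fun _ x ↦ m - x) (fun _ ↦ measurable_const.sub measurable_id)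
  have hZ k : HasSubgaussianMGF (fun ω ↦ m - Y k ω) (1 / 4) P :=
    (hasSubgaussianMGF_sub_of_mem_unitInterval (hY k) (h01 k) (hm k)).neg.congr
      (ae_of_all P fun ω ↦ by simp)
  convert measure_card_mul_le_sum_le hindZ hZ hδ using 3
  ext ω
  simp only [Finset.sum_sub_distrib, Finset.sum_const, Finset.card_univ, nsmul_eq_mul]
  rw [one_div, ← div_eq_inv_mul, div_le_iff₀ hcard]
  constructor <;> intro h <;> linarith

end Hoeffding

theorem misselection_union_bound_general
    {Ω : Type*} [MeasurableSpace Ω] (P : Measure Ω) [IsProbabilityMeasure P]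
    (K : ℕ)
    (n : Fin K → ℕ) (hn : ∀ i, 0 < n i)
    (X : (i : Fin K) → Fin (n i) → Ω → ℝ)
    (hmX : ∀ i k, Measurable (X i k))
    (hindep : iIndepFun
      (fun p : Σ i : Fin K, Fin (n i) => X p.1 p.2) P)
    (hX01 : ∀ i k ω, X i k ω ∈ Set.Icc (0 : ℝ) 1)
    (μ : Fin K → ℝ)
    (hEX : ∀ i k, ∫ ω, X i k ω ∂P = μ i)
    (star : Fin K)
    (δ : Fin K → ℝ)
    (hδ : ∀ i, i ≠ star → 0 < δ i ∧ δ i < μ star - μ i) :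
    P {ω | ∃ i, i ≠ star ∧
        (1 / (n i) : ℝ) * ∑ k, X i k ω ≥ (1 / (n star) : ℝ) * ∑ k, X star k ω}
      ≤ ENNReal.ofReal
          (∑ i ∈ Finset.univ.filter (· ≠ star),
            (Real.exp (-2 * (δ i) ^ 2 * n i)
              + Real.exp (-2 * (μ star - μ i - δ i) ^ 2 * n star))) := by
  have hindep_arm i : iIndepFun (X i) P :=
    hindep.precomp (g := Sigma.mk i) sigma_mk_injective
  have hnonempty i : Nonempty (Fin (n i)) := Fin.pos_iff_nonempty.mp (hn i)
  set A := fun i ↦ {ω | μ i + δ i ≤ (1 / n i : ℝ) * ∑ k, X i k ω}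
  set B := fun i ↦
    {ω | (1 / n star : ℝ) * ∑ k, X star k ω ≤ μ star - (μ star - μ i - δ i)}
  have hA i (hi : i ≠ star) : P (A i) ≤ ENNReal.ofReal (exp (-2 * δ i ^ 2 * n i)) := by
    simpa only [Fintype.card_fin] using
      measure_add_le_mean_le (hindep_arm i) (hmX i) (hX01 i) (hEX i) (hδ i hi).1.le
  have hB i (hi : i ≠ star) :
      P (B i) ≤ ENNReal.ofReal (exp (-2 * (μ star - μ i - δ i) ^ 2 * n star)) := by
    simpa only [Fintype.card_fin] using measure_mean_le_sub_le (hindep_arm star) (hmX star)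
      (hX01 star) (hEX star) (by linarith [(hδ i hi).2])
  calc _ ≤ P (⋃ i ∈ Finset.univ.filter (· ≠ star), (A i ∪ B i)) := by
        refine measure_mono fun ω ⟨i, hi, hge⟩ ↦ Set.mem_biUnion (by simpa using hi) ?_
        rcases le_or_gt (μ i + δ i) ((1 / n i : ℝ) * ∑ k, X i k ω) with h | h
        · exact Or.inl h
        · exact Or.inr (by simp only [B, Set.mem_ofPred]; linarith)
    _ ≤ ∑ i ∈ Finset.univ.filter (· ≠ star), (P (A i) + P (B i)) :=
        (measure_biUnion_finset_le _ _).trans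
          (Finset.sum_le_sum fun i _ ↦ measure_union_le _ _)
    _ ≤ _ := by
        rw [ENNReal.ofReal_sum_of_nonneg fun i _ ↦ by positivity]
        refine Finset.sum_le_sum fun i hi ↦ ?_
        have hi : i ≠ star := (Finset.mem_filter.mp hi).2
        rw [ENNReal.ofReal_add (exp_pos _).le (exp_pos _).le]
        exact add_le_add (hA i hi) (hB i hi)

/-- Misselection bound for a fixed allocation over `K` arms: the probability
that some suboptimal arm's sample mean is at least the optimal arm's sample
mean is bounded via a union bound and the Chernoff–Hoeffding bound, splitting
each interval `[μ i, μ star]` at `μ i + δ i`. -/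
theorem misselection_union_bound
    {Ω : Type*} [MeasurableSpace Ω] (P : Measure Ω) [IsProbabilityMeasure P]
    (K : ℕ) (hK : 2 ≤ K)
    (n : Fin K → ℕ) (hn : ∀ i, 0 < n i)
    (X : (i : Fin K) → Fin (n i) → Ω → ℝ)
    (hmX : ∀ i k, Measurable (X i k))
    (hindep : iIndepFun
      (fun p : Σ i : Fin K, Fin (n i) => X p.1 p.2) P)
    (hX01 : ∀ i k ω, X i k ω ∈ Set.Icc (0 : ℝ) 1)
    (μ : Fin K → ℝ)
    (hEX : ∀ i k, ∫ ω, X i k ω ∂P = μ i)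
    (star : Fin K) (hstar : ∀ i, i ≠ star → μ i < μ star)
    (δ : Fin K → ℝ)
    (hδ : ∀ i, i ≠ star → 0 < δ i ∧ δ i < μ star - μ i) :
    P {ω | ∃ i, i ≠ star ∧
        (1 / (n i) : ℝ) * ∑ k, X i k ω ≥ (1 / (n star) : ℝ) * ∑ k, X star k ω}
      ≤ ENNReal.ofReal
          (∑ i ∈ Finset.univ.filter (· ≠ star),
            (Real.exp (-2 * (δ i) ^ 2 * n i)
              + Real.exp (-2 * (μ star - μ i - δ i) ^ 2 * n star))) :=
  misselection_union_bound_general P K n hn X hmX hindep hX01 μ hEX star δ hδ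
end

section
/- Let (Ω, P) be a probability space and K ≥ 2 an integer number of arms. Let 0 < ε < 1, and suppose arm * (the unique arm with maximal mean μ_*) is sampled n_* times and every other arm i is sampled n_i times, where n_* ≥ n·ε and n_i ≥ n·(1−ε)/(K−1) for a given positive real n; all samples are jointly independent, take values in [0,1], and each sample of arm i has expectation μ_i. Write Δ_i = μ_* − μ_i and X̄_i for the sample mean of arm i. Let J be any random arm index, measurable with respect to the samples, such that X̄_J = max_i X̄_i (J selects an arm with the greatest sample mean). Then the simple regret satisfies E[μ_* − μ_J] ≤ 2·Σ_{i ≠ *} Δ_i · exp( −2Δ_i² n ε / (1 + √((K−1)ε/(1−ε)))² ). -/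
/-!
By Hoeffding's inequality, the sample mean of `m` independent `[0,1]`-valued samples exceeds its
mean by `δ` (or falls short of it by `δ`) with probability at most `exp (-2 m δ²)`. An arm `i ≠ *`
can only be selected if its sample mean reaches some threshold `c` or that of `*` falls to `c`;
taking `c = μᵢ + r η = μ_* - η` with `η = Δᵢ / (1 + r)` and `r = √((K-1)ε/(1-ε))`, both
Hoeffding exponents are at least `2 Δᵢ² n ε / (1 + r)²`. Summing `Δᵢ P(J = i)` gives the bound.
-/

open MeasureTheory ProbabilityTheory Real

noncomputable def sampleMean {Ω : Type*} {m : ℕ} (X : Fin m → Ω → ℝ) (ω : Ω) : ℝ :=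
  (1 / m : ℝ) * ∑ k, X k ω

lemma preimage_singleton_subset_of_forall_le {Ω ι : Type*} {J : Ω → ι} {Y : ι → Ω → ℝ}
    (hJ : ∀ ω i, Y i ω ≤ Y (J ω) ω) (i s : ι) (c : ℝ) :
    J ⁻¹' {i} ⊆ {ω | c ≤ Y i ω} ∪ {ω | Y s ω ≤ c} := by
  intro ω (hω : J ω = i)
  by_contra! h
  simp only [Set.mem_union, Set.mem_ofPred_eq, not_or, not_le] at h
  linarith [hJ ω s, hω ▸ h.1]

lemma integral_comp_eq_sum_measureReal_preimage {Ω ι : Type*} [MeasurableSpace Ω] {P : Measure Ω}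
    [IsFiniteMeasure P] [Fintype ι] [MeasurableSpace ι] [MeasurableSingletonClass ι] {J : Ω → ι}
    (hJ : Measurable J) (f : ι → ℝ) :
    ∫ ω, f (J ω) ∂P = ∑ j, P.real (J ⁻¹' {j}) * f j := by
  rw [← integral_map hJ.aemeasurable (measurable_of_finite f).aestronglyMeasurable,
    integral_fintype .of_finite]
  simp [map_measureReal_apply hJ (measurableSet_singleton _)]

section Hoeffding

variable {Ω : Type*} [MeasurableSpace Ω] {P : Measure Ω} [IsProbabilityMeasure P]
  {m : ℕ} {X : Fin m → Ω → ℝ} {μ₀ δ : ℝ}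

lemma measureReal_le_sampleMean_le (hm : 0 < m) (hmeas : ∀ k, Measurable (X k))
    (hindep : iIndepFun X P) (h01 : ∀ k ω, X k ω ∈ Set.Icc (0 : ℝ) 1)
    (hmean : ∀ k, ∫ ω, X k ω ∂P = μ₀) (hδ : 0 ≤ δ) :
    P.real {ω | μ₀ + δ ≤ sampleMean X ω} ≤ exp (-2 * m * δ ^ 2) := by
  have hsubG : ∀ k ∈ Finset.univ, HasSubgaussianMGF (fun ω ↦ X k ω - μ₀)
      ((‖(1 : ℝ) - 0‖₊ / 2) ^ 2) P := fun k _ ↦ by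
    simpa only [hmean k] using hasSubgaussianMGF_of_mem_Icc (μ := P) (hmeas k).aemeasurable
      (ae_of_all _ (h01 k))
  have hcenter : iIndepFun (fun k ω ↦ X k ω - μ₀) P :=
    hindep.comp (fun _ x ↦ x - μ₀) fun _ ↦ measurable_id.sub_const _
  have hset : {ω | μ₀ + δ ≤ sampleMean X ω} = {ω | m * δ ≤ ∑ k, (X k ω - μ₀)} := by
    ext ω
    simp only [sampleMean, Set.mem_ofPred_eq, Finset.sum_sub_distrib, Finset.sum_const,
      Finset.card_univ, Fintype.card_fin, nsmul_eq_mul]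
    rw [one_div, le_inv_mul_iff₀ (by positivity)]
    constructor <;> intro h <;> linarith
  calc P.real {ω | μ₀ + δ ≤ sampleMean X ω}
      ≤ exp (-(m * δ) ^ 2 / (2 * ((∑ _k : Fin m, (‖(1 : ℝ) - 0‖₊ / 2) ^ 2 : NNReal) : ℝ))) := by
        rw [hset]
        exact HasSubgaussianMGF.measure_sum_ge_le_of_iIndepFun hcenter hsubG (by positivity)
    _ = exp (-2 * m * δ ^ 2) := by
        congr 1
        simp only [sub_zero, nnnorm_one, one_div, inv_pow, Finset.sum_const, Finset.card_univ,
          Fintype.card_fin, nsmul_eq_mul, NNReal.coe_mul, NNReal.coe_natCast, NNReal.coe_inv,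
          NNReal.coe_pow, NNReal.coe_ofNat, neg_mul]
        field_simp

lemma measureReal_sampleMean_le_le (hm : 0 < m) (hmeas : ∀ k, Measurable (X k))
    (hindep : iIndepFun X P) (h01 : ∀ k ω, X k ω ∈ Set.Icc (0 : ℝ) 1)
    (hmean : ∀ k, ∫ ω, X k ω ∂P = μ₀) (hδ : 0 ≤ δ) :
    P.real {ω | sampleMean X ω ≤ μ₀ - δ} ≤ exp (-2 * m * δ ^ 2) := by
  have hmean' : ∀ k, ∫ ω, (1 - X k ω) ∂P = 1 - μ₀ := fun k ↦ by
    rw [integral_sub (integrable_const 1)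
      (.of_mem_Icc 0 1 (hmeas k).aemeasurable (ae_of_all _ (h01 k))), hmean k]
    simp
  have hset : {ω | sampleMean X ω ≤ μ₀ - δ}
      = {ω | 1 - μ₀ + δ ≤ sampleMean (fun k ω ↦ 1 - X k ω) ω} := by
    ext ω
    simp only [sampleMean, Set.mem_ofPred_eq, Finset.sum_sub_distrib, Finset.sum_const,
      Finset.card_univ, Fintype.card_fin, nsmul_eq_mul, mul_sub, mul_one]
    rw [one_div, inv_mul_cancel₀ (by positivity)]
    constructor <;> intro h <;> linarith
  rw [hset]
  exact measureReal_le_sampleMean_le hm (fun k ↦ measurable_const.sub (hmeas k))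
    (hindep.comp (fun _ x ↦ 1 - x) fun _ ↦ measurable_const.sub measurable_id)
    (fun k ω ↦ ⟨by linarith [(h01 k ω).2], by linarith [(h01 k ω).1]⟩) hmean' hδ

end Hoeffding

lemma exp_add_exp_le_of_sq_mul_eq {r a b x y η : ℝ} (hab : r ^ 2 * a = b) (hx : a ≤ x)
    (hy : b ≤ y) :
    exp (-2 * x * (r * η) ^ 2) + exp (-2 * y * η ^ 2) ≤ 2 * exp (-2 * b * η ^ 2) := by
  have hx' : b * η ^ 2 ≤ x * (r * η) ^ 2 := by
    rw [← hab]
    linear_combination mul_le_mul_of_nonneg_right hx (sq_nonneg (r * η))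
  have hy' : b * η ^ 2 ≤ y * η ^ 2 := mul_le_mul_of_nonneg_right hy (sq_nonneg η)
  rw [two_mul]
  exact add_le_add (exp_le_exp.mpr (by linarith)) (exp_le_exp.mpr (by linarith))

section Bandit

variable {Ω ι : Type*} [MeasurableSpace Ω] {P : Measure Ω} [IsProbabilityMeasure P]
  {nsamp : ι → ℕ} {X : (i : ι) → Fin (nsamp i) → Ω → ℝ} {μ : ι → ℝ} {J : Ω → ι}

lemma measureReal_select_le_exp_add_exp (hnsamp : ∀ i, 0 < nsamp i)
    (hmX : ∀ i k, Measurable (X i k)) (hindep : ∀ i, iIndepFun (X i) P)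
    (hX01 : ∀ i k ω, X i k ω ∈ Set.Icc (0 : ℝ) 1) (hEX : ∀ i k, ∫ ω, X i k ω ∂P = μ i)
    (hJ : ∀ ω i, sampleMean (X i) ω ≤ sampleMean (X (J ω)) ω)
    {i s : ι} {δ η : ℝ} (hδ : 0 ≤ δ) (hη : 0 ≤ η) (hsplit : μ i + δ = μ s - η) :
    P.real (J ⁻¹' {i}) ≤ exp (-2 * nsamp i * δ ^ 2) + exp (-2 * nsamp s * η ^ 2) := by
  calc P.real (J ⁻¹' {i})
      ≤ P.real {ω | μ i + δ ≤ sampleMean (X i) ω}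
        + P.real {ω | sampleMean (X s) ω ≤ μ s - η} := by
        refine (measureReal_mono (preimage_singleton_subset_of_forall_le hJ i s (μ i + δ))).trans ?_
        rw [← hsplit]
        exact measureReal_union_le _ _
    _ ≤ exp (-2 * nsamp i * δ ^ 2) + exp (-2 * nsamp s * η ^ 2) :=
        add_le_add
          (measureReal_le_sampleMean_le (hnsamp i) (hmX i) (hindep i) (hX01 i) (hEX i) hδ)
          (measureReal_sampleMean_le_le (hnsamp s) (hmX s) (hindep s) (hX01 s) (hEX s) hη)

lemma measureReal_select_le_two_mul_exp (hnsamp : ∀ i, 0 < nsamp i)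
    (hmX : ∀ i k, Measurable (X i k)) (hindep : ∀ i, iIndepFun (X i) P)
    (hX01 : ∀ i k ω, X i k ω ∈ Set.Icc (0 : ℝ) 1) (hEX : ∀ i k, ∫ ω, X i k ω ∂P = μ i)
    (hJ : ∀ ω i, sampleMean (X i) ω ≤ sampleMean (X (J ω)) ω)
    {i s : ι} (hμ : μ i ≤ μ s) {r a b : ℝ} (hr : 0 ≤ r) (hab : r ^ 2 * a = b)
    (hni : a ≤ nsamp i) (hns : b ≤ nsamp s) :
    P.real (J ⁻¹' {i}) ≤ 2 * exp (-2 * (μ s - μ i) ^ 2 * b / (1 + r) ^ 2) := by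
  have h1r : 0 < 1 + r := by positivity
  set η := (μ s - μ i) / (1 + r)
  have hη : 0 ≤ η := div_nonneg (sub_nonneg.mpr hμ) h1r.le
  calc P.real (J ⁻¹' {i})
      ≤ exp (-2 * nsamp i * (r * η) ^ 2) + exp (-2 * nsamp s * η ^ 2) :=
        measureReal_select_le_exp_add_exp hnsamp hmX hindep hX01 hEX hJ (by positivity) hη
          (by simp only [η]; field_simp; ring)
    _ ≤ 2 * exp (-2 * b * η ^ 2) := exp_add_exp_le_of_sq_mul_eq hab hni hns
    _ = 2 * exp (-2 * (μ s - μ i) ^ 2 * b / (1 + r) ^ 2) := by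
        simp only [η, div_pow]; ring_nf

end Bandit

theorem simple_regret_eps_greedy_bound_general
    {Ω : Type*} [MeasurableSpace Ω] (P : Measure Ω) [IsProbabilityMeasure P]
    (K : ℕ) (hK : 2 ≤ K)
    (ε : ℝ) (hε0 : 0 < ε) (hε1 : ε < 1)
    (n : ℝ)
    (nsamp : Fin K → ℕ) (hnsamp : ∀ i, 0 < nsamp i)
    (X : (i : Fin K) → Fin (nsamp i) → Ω → ℝ)
    (hmX : ∀ i k, Measurable (X i k))
    (hindep : iIndepFun
      (fun p : Σ i : Fin K, Fin (nsamp i) => X p.1 p.2) P)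
    (hX01 : ∀ i k ω, X i k ω ∈ Set.Icc (0 : ℝ) 1)
    (μ : Fin K → ℝ)
    (hEX : ∀ i k, ∫ ω, X i k ω ∂P = μ i)
    (star : Fin K) (hstar : ∀ i, i ≠ star → μ i < μ star)
    (hnstar : (nsamp star : ℝ) ≥ n * ε)
    (hni : ∀ i, i ≠ star → (nsamp i : ℝ) ≥ n * (1 - ε) / (K - 1))
    (J : Ω → Fin K) (hJmeas : Measurable J)
    (hJ : ∀ ω i, (1 / (nsamp i) : ℝ) * ∑ k, X i k ω
        ≤ (1 / (nsamp (J ω)) : ℝ) * ∑ k, X (J ω) k ω) :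
    ∫ ω, (μ star - μ (J ω)) ∂P
      ≤ 2 * ∑ i ∈ Finset.univ.filter (· ≠ star),
          (μ star - μ i) *
            Real.exp (-2 * (μ star - μ i) ^ 2 * n * ε
              / (1 + Real.sqrt ((K - 1) * ε / (1 - ε))) ^ 2) := by
  set r := √((K - 1) * ε / (1 - ε))
  have hK1 : (0 : ℝ) < K - 1 := by
    have : (2 : ℝ) ≤ K := by exact_mod_cast hK
    linarith
  have hr : r ^ 2 * (n * (1 - ε) / (K - 1)) = n * ε := by
    rw [sq_sqrt (by have := sub_pos.mpr hε1; positivity)]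
    field_simp [(sub_pos.mpr hε1).ne']
  have hselect : ∀ i ≠ star,
      P.real (J ⁻¹' {i}) ≤ 2 * exp (-2 * (μ star - μ i) ^ 2 * n * ε / (1 + r) ^ 2) := by
    intro i hi
    rw [mul_assoc _ n ε]
    exact measureReal_select_le_two_mul_exp hnsamp hmX
      (fun i ↦ (hindep.precomp (g := Sigma.mk i) sigma_mk_injective :)) hX01 hEX hJ
      (hstar i hi).le (sqrt_nonneg _) hr (hni i hi) hnstar
  calc ∫ ω, (μ star - μ (J ω)) ∂P
      = ∑ i, P.real (J ⁻¹' {i}) * (μ star - μ i) :=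
        integral_comp_eq_sum_measureReal_preimage hJmeas (fun i ↦ μ star - μ i)
    _ = ∑ i ∈ Finset.univ.filter (· ≠ star), P.real (J ⁻¹' {i}) * (μ star - μ i) := by
        rw [Finset.sum_filter_of_ne]
        rintro i - hi rfl
        simp at hi
    _ ≤ _ := by
        rw [Finset.mul_sum]
        refine Finset.sum_le_sum fun i hi ↦ ?_
        have hi : i ≠ star := (Finset.mem_filter.mp hi).2
        have := mul_le_mul_of_nonneg_right (hselect i hi) (sub_nonneg.mpr (hstar i hi).le)
        convert this using 1
        ring

/-- Fixed-allocation form of the simple-regret bound for ε-greedy sampling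
(Theorem 1 of the paper): if the best arm receives at least `n * ε` samples and
every other arm at least `n * (1 - ε) / (K - 1)` samples, then the expected
simple regret of selecting an arm with the greatest sample mean is at most
`2 ∑_{i ≠ *} Δ_i exp (-2 Δ_i² n ε / (1 + √((K-1)ε/(1-ε)))²)`. -/
theorem simple_regret_eps_greedy_bound
    {Ω : Type*} [MeasurableSpace Ω] (P : Measure Ω) [IsProbabilityMeasure P]
    (K : ℕ) (hK : 2 ≤ K)
    (ε : ℝ) (hε0 : 0 < ε) (hε1 : ε < 1)
    (n : ℝ) (hn : 0 < n)
    (nsamp : Fin K → ℕ) (hnsamp : ∀ i, 0 < nsamp i)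
    (X : (i : Fin K) → Fin (nsamp i) → Ω → ℝ)
    (hmX : ∀ i k, Measurable (X i k))
    (hindep : iIndepFun
      (fun p : Σ i : Fin K, Fin (nsamp i) => X p.1 p.2) P)
    (hX01 : ∀ i k ω, X i k ω ∈ Set.Icc (0 : ℝ) 1)
    (μ : Fin K → ℝ)
    (hEX : ∀ i k, ∫ ω, X i k ω ∂P = μ i)
    (star : Fin K) (hstar : ∀ i, i ≠ star → μ i < μ star)
    (hnstar : (nsamp star : ℝ) ≥ n * ε)
    (hni : ∀ i, i ≠ star → (nsamp i : ℝ) ≥ n * (1 - ε) / (K - 1))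
    (J : Ω → Fin K) (hJmeas : Measurable J)
    (hJ : ∀ ω i, (1 / (nsamp i) : ℝ) * ∑ k, X i k ω
        ≤ (1 / (nsamp (J ω)) : ℝ) * ∑ k, X (J ω) k ω) :
    ∫ ω, (μ star - μ (J ω)) ∂P
      ≤ 2 * ∑ i ∈ Finset.univ.filter (· ≠ star),
          (μ star - μ i) *
            Real.exp (-2 * (μ star - μ i) ^ 2 * n * ε
              / (1 + Real.sqrt ((K - 1) * ε / (1 - ε))) ^ 2) :=
  simple_regret_eps_greedy_bound_general P K hK ε hε0 hε1 n nsamp hnsamp X hmX hindep hX01 μ hEX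
    star hstar hnstar hni J hJmeas hJ
end

section
/- Let (Ω, P) be a probability space and K ≥ 2 an integer number of arms with unique best arm * (maximal mean μ_*). Let m be a positive integer and suppose every arm i is sampled exactly m times; all samples are jointly independent, take values in [0,1], and each sample of arm i has expectation μ_i. Write Δ_i = μ_* − μ_i and let X̄_i denote the sample mean of arm i. Let J be any random arm index, measurable with respect to the samples, such that X̄_J = max_i X̄_i. Then the simple regret satisfies E[μ_* − μ_J] ≤ 2·Σ_{i ≠ *} Δ_i · exp(−Δ_i² m / 2). -/
/-!
If the empirical best arm `J` is some `i ≠ *`, the sample sum of arm `i` is at least that of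
arm `*`. Splitting `[μ_i, μ_*]` at its midpoint, either arm `i` overshoots its mean or arm `*`
undershoots its mean by `m Δ_i / 2`; by Hoeffding's inequality each of these has probability at
most `exp (-Δ_i² m / 2)`. The regret is `∑_{i ≠ *} Δ_i P(J = i)`.
-/

open MeasureTheory ProbabilityTheory

open Real Finset

section

variable {Ω : Type*} [MeasurableSpace Ω] {P : Measure Ω}

theorem integral_comp_eq_sum_measureReal {α : Type*} [Fintype α] [MeasurableSpace α]
    [MeasurableSingletonClass α] [IsFiniteMeasure P] {J : Ω → α} (hJ : Measurable J)
    (f : α → ℝ) :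
    ∫ ω, f (J ω) ∂P = ∑ i, P.real (J ⁻¹' {i}) * f i := by
  rw [← integral_map hJ.aemeasurable Measurable.of_discrete.aestronglyMeasurable,
    integral_fintype .of_finite]
  simp [map_measureReal_apply hJ (measurableSet_singleton _)]

section Hoeffding

variable {ι : Type*} [IsProbabilityMeasure P] {Y : ι → Ω → ℝ} {a b : ℝ}

theorem measureReal_le_sum_sub_integral_le (hmeas : ∀ k, Measurable (Y k))
    (hindep : iIndepFun Y P) (hab : ∀ k ω, Y k ω ∈ Set.Icc a b) (s : Finset ι) {ε : ℝ}
    (hε : 0 ≤ ε) :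
    P.real {ω | ε ≤ ∑ k ∈ s, (Y k ω - P[Y k])} ≤ exp (-2 * ε ^ 2 / (#s * (b - a) ^ 2)) := by
  have hcentered := hindep.comp (fun k (x : ℝ) ↦ x - P[Y k]) fun _ ↦ measurable_sub_const _
  have hsubG := HasSubgaussianMGF.measure_sum_ge_le_of_iIndepFun hcentered (s := s)
    (fun k _ ↦ hasSubgaussianMGF_of_mem_Icc (hmeas k).aemeasurable (ae_of_all _ (hab k))) hε
  have hvar : 2 * ((∑ _k ∈ s, (‖b - a‖₊ / 2) ^ 2 : NNReal) : ℝ) = #s * (b - a) ^ 2 / 2 := by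
    push_cast
    rw [Real.norm_eq_abs, div_pow, sq_abs, sum_const, nsmul_eq_mul]
    ring
  rwa [hvar, div_div_eq_mul_div, neg_mul_comm, mul_comm] at hsubG

theorem measureReal_le_sum_integral_sub_le (hmeas : ∀ k, Measurable (Y k))
    (hindep : iIndepFun Y P) (hab : ∀ k ω, Y k ω ∈ Set.Icc a b) (s : Finset ι) {ε : ℝ}
    (hε : 0 ≤ ε) :
    P.real {ω | ε ≤ ∑ k ∈ s, (P[Y k] - Y k ω)} ≤ exp (-2 * ε ^ 2 / (#s * (b - a) ^ 2)) := by
  have hneg := measureReal_le_sum_sub_integral_le (Y := fun k ω ↦ -Y k ω) (a := -b) (b := -a)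
    (fun k ↦ (hmeas k).neg) (hindep.comp (fun _ x ↦ -x) fun _ ↦ measurable_neg)
    (fun k ω ↦ Set.neg_mem_Icc_iff.mpr (by simpa using hab k ω)) s hε
  simpa only [integral_neg, sub_neg_eq_add, neg_add_eq_sub] using hneg

end Hoeffding

theorem measureReal_sum_le_sum_le [IsProbabilityMeasure P] {m : ℕ} (hm : 0 < m)
    {Y Z : Fin m → Ω → ℝ} (hmY : ∀ k, Measurable (Y k)) (hmZ : ∀ k, Measurable (Z k))
    (hY : iIndepFun Y P) (hZ : iIndepFun Z P)
    (hY01 : ∀ k ω, Y k ω ∈ Set.Icc (0 : ℝ) 1) (hZ01 : ∀ k ω, Z k ω ∈ Set.Icc (0 : ℝ) 1)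
    {μY μZ : ℝ} (hEY : ∀ k, P[Y k] = μY) (hEZ : ∀ k, P[Z k] = μZ) (hμ : μY ≤ μZ) :
    P.real {ω | ∑ k, Z k ω ≤ ∑ k, Y k ω} ≤ 2 * exp (-(μZ - μY) ^ 2 * m / 2) := by
  set ε : ℝ := m * (μZ - μY) / 2 with hε_def
  have hε : 0 ≤ ε := by have := sub_nonneg.2 hμ; positivity
  have hsplit : {ω | ∑ k, Z k ω ≤ ∑ k, Y k ω} ⊆
      {ω | ε ≤ ∑ k, (Y k ω - P[Y k])} ∪ {ω | ε ≤ ∑ k, (P[Z k] - Z k ω)} := by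
    intro ω hω
    simp only [Set.mem_union, Set.mem_ofPred_eq, hEY, hEZ, sum_sub_distrib, sum_const, card_univ,
      Fintype.card_fin, nsmul_eq_mul] at hω ⊢
    by_contra! ⟨hY_close, hZ_close⟩
    linarith
  have hexp : -2 * ε ^ 2 / (#(univ : Finset (Fin m)) * (1 - 0) ^ 2) = -(μZ - μY) ^ 2 * m / 2 := by
    have : (m : ℝ) ≠ 0 := by positivity
    simp only [card_univ, Fintype.card_fin, ε]
    field_simp
    ring
  calc P.real {ω | ∑ k, Z k ω ≤ ∑ k, Y k ω}
      ≤ P.real {ω | ε ≤ ∑ k, (Y k ω - P[Y k])} + P.real {ω | ε ≤ ∑ k, (P[Z k] - Z k ω)} :=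
        (measureReal_mono hsplit).trans (measureReal_union_le _ _)
    _ ≤ exp (-(μZ - μY) ^ 2 * m / 2) + exp (-(μZ - μY) ^ 2 * m / 2) := by
        rw [← hexp]
        exact add_le_add (measureReal_le_sum_sub_integral_le hmY hY hY01 _ hε)
          (measureReal_le_sum_integral_sub_le hmZ hZ hZ01 _ hε)
    _ = 2 * exp (-(μZ - μY) ^ 2 * m / 2) := (two_mul _).symm

end

theorem simple_regret_uniform_bound_general
    {Ω : Type*} [MeasurableSpace Ω] (P : Measure Ω) [IsProbabilityMeasure P]
    (K : ℕ)
    (m : ℕ) (hm : 0 < m)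
    (X : Fin K → Fin m → Ω → ℝ)
    (hmX : ∀ i k, Measurable (X i k))
    (hindep : iIndepFun
      (fun p : Fin K × Fin m => X p.1 p.2) P)
    (hX01 : ∀ i k ω, X i k ω ∈ Set.Icc (0 : ℝ) 1)
    (μ : Fin K → ℝ)
    (hEX : ∀ i k, ∫ ω, X i k ω ∂P = μ i)
    (star : Fin K) (hstar : ∀ i, i ≠ star → μ i < μ star)
    (J : Ω → Fin K) (hJmeas : Measurable J)
    (hJ : ∀ ω i, (1 / m : ℝ) * ∑ k, X i k ω
        ≤ (1 / m : ℝ) * ∑ k, X (J ω) k ω) :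
    ∫ ω, (μ star - μ (J ω)) ∂P
      ≤ 2 * ∑ i ∈ Finset.univ.filter (· ≠ star),
          (μ star - μ i) * Real.exp (-(μ star - μ i) ^ 2 * m / 2) := by
  have harm (i : Fin K) : iIndepFun (X i) P :=
    hindep.precomp (g := Prod.mk i) (Prod.mk_right_injective i)
  have hchosen : ∀ i ≠ star, P.real (J ⁻¹' {i}) ≤ 2 * exp (-(μ star - μ i) ^ 2 * m / 2) := by
    intro i hi
    refine (measureReal_mono fun ω (hω : J ω = i) ↦ ?_).trans <|
      measureReal_sum_le_sum_le hm (hmX i) (hmX star) (harm i) (harm star) (hX01 i) (hX01 star)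
        (hEX i) (hEX star) (hstar i hi).le
    have hmean := hJ ω star
    rw [hω] at hmean
    exact le_of_mul_le_mul_left hmean (by positivity)
  rw [integral_comp_eq_sum_measureReal hJmeas (fun i ↦ μ star - μ i), mul_sum,
    ← sum_filter_of_ne (p := (· ≠ star)) fun i _ h ↦ by rintro rfl; simp at h]
  refine sum_le_sum fun i hi ↦ ?_
  have hi : i ≠ star := (mem_filter.1 hi).2
  have hgap : 0 ≤ μ star - μ i := sub_nonneg.2 (hstar i hi).le
  calc P.real (J ⁻¹' {i}) * (μ star - μ i)
      ≤ 2 * exp (-(μ star - μ i) ^ 2 * m / 2) * (μ star - μ i) :=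
        mul_le_mul_of_nonneg_right (hchosen i hi) hgap
    _ = _ := by ring

/-- Simple-regret bound for uniform sampling over `K` arms: if every arm is
sampled exactly `m` times, then the expected simple regret of selecting an arm
with the greatest sample mean is at most `2 ∑_{i ≠ *} Δ_i exp (-Δ_i² m / 2)`. -/
theorem simple_regret_uniform_bound
    {Ω : Type*} [MeasurableSpace Ω] (P : Measure Ω) [IsProbabilityMeasure P]
    (K : ℕ) (hK : 2 ≤ K)
    (m : ℕ) (hm : 0 < m)
    (X : Fin K → Fin m → Ω → ℝ)
    (hmX : ∀ i k, Measurable (X i k))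
    (hindep : iIndepFun
      (fun p : Fin K × Fin m => X p.1 p.2) P)
    (hX01 : ∀ i k ω, X i k ω ∈ Set.Icc (0 : ℝ) 1)
    (μ : Fin K → ℝ)
    (hEX : ∀ i k, ∫ ω, X i k ω ∂P = μ i)
    (star : Fin K) (hstar : ∀ i, i ≠ star → μ i < μ star)
    (J : Ω → Fin K) (hJmeas : Measurable J)
    (hJ : ∀ ω i, (1 / m : ℝ) * ∑ k, X i k ω
        ≤ (1 / m : ℝ) * ∑ k, X (J ω) k ω) :
    ∫ ω, (μ star - μ (J ω)) ∂P
      ≤ 2 * ∑ i ∈ Finset.univ.filter (· ≠ star),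
          (μ star - μ i) * Real.exp (-(μ star - μ i) ^ 2 * m / 2) :=
  simple_regret_uniform_bound_general P K m hm X hmX hindep hX01 μ hEX star hstar J hJmeas hJ
end
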